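/- arXiv:1406.7367 — 2 statements merged into one kernel-verified Lean document; each statement's English description precedes it below -/
import Mathlib

section
/- Distance lower bound from CBRs: Let v be a vertex and c a degree constraint. Suppose R is a CBR for an entry e (with vertex set V_e) with respect to c, and suppose W ∪ {v} is a c-core containing some u ∈ V_e. Then max_{w ∈ W} d(v, w) ≥ d_in(v, R), where d_in(v, R) is the minimum distance from p_v to the boundary of R if p_v ∈ R, and 0 otherwise. -/
open Finset

/-- `W` is a `c`-core of `G`: every vertex of `W` has at least `c` neighbors inside `W`. -/
def IsCore {V : Type*} (G : SimpleGraph V) (c : ℕ) (W : Finset V) : Prop :=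
  ∀ v ∈ W, c ≤ ({u ∈ (W : Set V) | G.Adj v u}).ncard

/-- `R` is a core bounding rectangle (CBR) for the vertex set `S` w.r.t. degree `c`:
any vertex group meeting `S` whose members' positions all lie strictly inside `R`
fails to be a `c`-core. -/
def IsCBR {V : Type*} (G : SimpleGraph V) (p : V → EuclideanSpace ℝ (Fin 2)) (c : ℕ)
    (S : Finset V) (R : Set (EuclideanSpace ℝ (Fin 2))) : Prop :=
  ∀ W : Finset V, (∃ u ∈ W, u ∈ S) → (∀ u ∈ W, p u ∈ interior R) → ¬ IsCore G c W

open scoped Classical in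
/-- The minimum distance from `x` to reach the boundary of `R` from inside;
`0` if `x ∉ R`. -/
noncomputable def dIn (x : EuclideanSpace ℝ (Fin 2)) (R : Set (EuclideanSpace ℝ (Fin 2))) : ℝ :=
  if x ∈ R then Metric.infDist x (frontier R) else 0

theorem stmt_12 {V : Type*} [DecidableEq V] (G : SimpleGraph V)
    (p : V → EuclideanSpace ℝ (Fin 2)) (c : ℕ) (Ve : Finset V)
    (R : Set (EuclideanSpace ℝ (Fin 2))) (v u : V) (W : Finset V)
    (hCBR : IsCBR G p c Ve R) (hcore : IsCore G c (insert v W))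
    (hu : u ∈ W) (huVe : u ∈ Ve) :
    ∃ w ∈ W, dIn (p v) R ≤ dist (p v) (p w) := by
  by_contra h
  push_neg at h
  have hd0 : 0 < dIn (p v) R := lt_of_le_of_lt dist_nonneg (h u hu)
  have hvR : p v ∈ R := by
    by_contra hvR
    simp [dIn, hvR] at hd0
  have hdIn : dIn (p v) R = Metric.infDist (p v) (frontier R) := by simp [dIn, hvR]
  set r := Metric.infDist (p v) (frontier R) with hr
  rw [hdIn] at hd0 h
  -- ball (p v) r ⊆ interior R
  have hxint : p v ∈ interior R := by
    have : p v ∉ frontier R := fun hf => absurd (Metric.infDist_zero_of_mem hf) (by linarith)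
    rw [← closure_diff_frontier]
    exact ⟨subset_closure hvR, this⟩
  have hball : Metric.ball (p v) r ⊆ interior R := by
    have hpre : IsPreconnected (Metric.ball (p v) r) := (convex_ball (p v) r).isPreconnected
    have hsub : Metric.ball (p v) r ⊆ interior R ∪ (closure R)ᶜ := by
      intro y hy
      have hyf : y ∉ frontier R := fun hf =>
        absurd (Metric.infDist_le_dist_of_mem hf) (not_le.mpr (Metric.mem_ball'.mp hy))
      rcases em (y ∈ closure R) with hc | hc
      · exact Or.inl (by rw [← closure_diff_frontier]; exact ⟨hc, hyf⟩)
      · exact Or.inr hc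
    have hdisj : Disjoint (interior R) (closure R)ᶜ :=
      Set.disjoint_compl_right_iff_subset.mpr (interior_subset.trans subset_closure)
    exact hpre.subset_left_of_subset_union isOpen_interior isClosed_closure.isOpen_compl
      hdisj hsub ⟨p v, Metric.mem_ball_self hd0, hxint⟩
  -- all of insert v W maps into interior R
  have hall : ∀ w ∈ insert v W, p w ∈ interior R := by
    intro w hw
    rcases Finset.mem_insert.mp hw with rfl | hw
    · exact hxint
    · exact hball (Metric.mem_ball'.mpr (h w hw))
  exact hCBR (insert v W) ⟨u, Finset.mem_insert_of_mem hu, huVe⟩ hall hcore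
end

section
/- Number of iterations bound for GSGQ_rkNN: in the incremental algorithm that adds users one at a time in order of distance and checks whether the maximal c-core of the accumulated set containing v has size at least k+1, if a solution exists among the n vertices, the algorithm finds the result set W minimizing the maximum distance d_max(v, W) among all c-cores W ∪ {v} of size ≥ k+1. Formally: the set of vertices within distance r of v, for the smallest r such that the maximal c-core of that set contains v and has size ≥ k+1, yields an optimal answer. -/
open Finset

theorem stmt_16 {V : Type*} [Fintype V] [DecidableEq V] (G : SimpleGraph V)
    (p : V → EuclideanSpace ℝ (Fin 2)) (v : V) (k c : ℕ) (hk : 1 ≤ k)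
    (r : ℝ) (M : Finset V)
    -- `M` is the maximal `c`-core of the set of vertices within distance `r` of `v`
    (hMball : ∀ u ∈ M, dist (p v) (p u) ≤ r)
    (hMcore : IsCore G c M)
    (hMmax : ∀ W'' : Finset V, (∀ u ∈ W'', dist (p v) (p u) ≤ r) → IsCore G c W'' → W'' ⊆ M)
    (hvM : v ∈ M) (hMcard : k + 1 ≤ M.card)
    -- `r` is the smallest such radius
    (hrmin : ∀ r' < r, ¬ ∃ W'' : Finset V, (∀ u ∈ W'', dist (p v) (p u) ≤ r') ∧
      IsCore G c W'' ∧ v ∈ W'' ∧ k + 1 ≤ W''.card) :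
    -- then `M.erase v` is a feasible and optimal answer
    k ≤ (M.erase v).card ∧
      ∀ W₂ : Finset V, v ∉ W₂ → k ≤ W₂.card → IsCore G c (insert v W₂) →
        ∀ w ∈ M.erase v, ∃ w₂ ∈ W₂, dist (p v) (p w) ≤ dist (p v) (p w₂) := by
  constructor
  · have := M.card_erase_of_mem hvM
    omega
  · intro W₂ hvW₂ hW₂card hW₂core w hw
    have hW₂ne : W₂.Nonempty := Finset.card_pos.mp (by omega)
    obtain ⟨w₂, hw₂mem, hw₂max⟩ := W₂.exists_max_image (fun u => dist (p v) (p u)) hW₂ne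
    refine ⟨w₂, hw₂mem, ?_⟩
    have hrle : r ≤ dist (p v) (p w₂) := by
      by_contra h
      push_neg at h
      exact hrmin _ h ⟨insert v W₂, by
        intro u hu
        rcases Finset.mem_insert.mp hu with rfl | hu
        · simpa using dist_nonneg.trans (hw₂max w₂ hw₂mem)
        · exact hw₂max u hu,
        hW₂core, Finset.mem_insert_self _ _, by
          rw [Finset.card_insert_of_notMem hvW₂]; omega⟩
    exact (hMball w (Finset.mem_of_mem_erase hw)).trans hrle
end
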